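/- (Twin immersion on the level of fundamental data.) Let κ, τ be real constants with κ − 4τ² ≠ 0 and τ ≠ 0, and let (λ, u, H, p, A) be a fundamental data set on an open set Ω ⊆ ℂ for (κ, τ) in which H is a nonzero constant. Let α ∈ ℝ satisfy e^{iα}·(H + iτ) = −H + iτ. Then (λ, u, −H, e^{iα}·p, e^{iα}·A) is a fundamental data set on Ω for the same (κ, τ). -/

import Mathlib

open Complex

/-- Wirtinger derivative `∂f/∂z = (f_s - i f_t)/2`. -/
noncomputable def wdz (f : ℂ → ℂ) (z : ℂ) : ℂ :=
  (fderiv ℝ f z 1 - Complex.I * fderiv ℝ f z Complex.I) / 2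

/-- Wirtinger derivative `∂f/∂z̄ = (f_s + i f_t)/2`. -/
noncomputable def wdzbar (f : ℂ → ℂ) (z : ℂ) : ℂ :=
  (fderiv ℝ f z 1 + Complex.I * fderiv ℝ f z Complex.I) / 2

/-- A fundamental data set `(λ, u, H, p, A)` on `Ω` for the pair `(κ, τ)`:
smooth functions `lam, u, H : Ω → ℝ` with `lam > 0`, and `p, A : Ω → ℂ`,
satisfying the integrability equations (C.1)–(C.4). -/
lemma wdz_const_mul (c : ℂ) (f : ℂ → ℂ) (z : ℂ) (hf : DifferentiableAt ℝ f z) :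
    wdz (fun w => c * f w) z = c * wdz f z := by
  simp only [wdz, fderiv_const_mul hf, ContinuousLinearMap.smul_apply, smul_eq_mul]
  ring

lemma wdzbar_const_mul (c : ℂ) (f : ℂ → ℂ) (z : ℂ) (hf : DifferentiableAt ℝ f z) :
    wdzbar (fun w => c * f w) z = c * wdzbar f z := by
  simp only [wdzbar, fderiv_const_mul hf, ContinuousLinearMap.smul_apply, smul_eq_mul]
  ring

lemma wdz_const (c : ℂ) (z : ℂ) : wdz (fun _ => c) z = 0 := by
  simp [wdz, fderiv_const]

structure IsFundData (κ τ : ℝ) (Ω : Set ℂ) (lam u H : ℂ → ℝ) (p A : ℂ → ℂ) : Prop where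
  smooth_lam : ContDiffOn ℝ (⊤ : ℕ∞) lam Ω
  smooth_u : ContDiffOn ℝ (⊤ : ℕ∞) u Ω
  smooth_H : ContDiffOn ℝ (⊤ : ℕ∞) H Ω
  smooth_p : ContDiffOn ℝ (⊤ : ℕ∞) p Ω
  smooth_A : ContDiffOn ℝ (⊤ : ℕ∞) A Ω
  lam_pos : ∀ z ∈ Ω, 0 < lam z
  c1 : ∀ z ∈ Ω, wdzbar p z =
    ((lam z : ℂ) / 2) * (wdz (fun w => (H w : ℂ)) z + (u z : ℂ) * A z * ((κ : ℂ) - 4 * (τ : ℂ) ^ 2))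
  c2 : ∀ z ∈ Ω, wdzbar A z = ((u z : ℂ) * (lam z : ℂ) / 2) * ((H z : ℂ) + Complex.I * (τ : ℂ))
  c3 : ∀ z ∈ Ω, wdz (fun w => (u w : ℂ)) z =
    -((H z : ℂ) - Complex.I * (τ : ℂ)) * A z - (2 * p z / (lam z : ℂ)) * (starRingEnd ℂ) (A z)
  c4 : ∀ z ∈ Ω, 4 * (‖A z‖) ^ 2 / lam z = 1 - (u z) ^ 2

/-- The twin immersion, on the level of fundamental data: if `H ≠ 0` is constant, `τ ≠ 0`
and `e^{iα}(H + iτ) = −H + iτ`, then `(λ, u, −H, e^{iα}p, e^{iα}A)` is again a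
fundamental data set for `(κ, τ)`. -/
theorem stmt_5 (κ τ H α : ℝ) (hκτ : κ - 4 * τ ^ 2 ≠ 0) (hτ : τ ≠ 0) (hH : H ≠ 0)
    (hα : Complex.exp (Complex.I * α) * ((H : ℂ) + Complex.I * τ)
      = -(H : ℂ) + Complex.I * τ)
    (Ω : Set ℂ) (hΩ : IsOpen Ω) (lam u : ℂ → ℝ) (p A : ℂ → ℂ)
    (h : IsFundData κ τ Ω lam u (fun _ => H) p A) :
    IsFundData κ τ Ω lam u (fun _ => -H)
      (fun z => Complex.exp (Complex.I * α) * p z)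
      (fun z => Complex.exp (Complex.I * α) * A z) := by

  have hc1 : ‖(Complex.exp (Complex.I * ↑α))‖ = 1 := by
    rw [Complex.norm_exp]; simp
  have hcc : Complex.exp (Complex.I * ↑α) * (starRingEnd ℂ) (Complex.exp (Complex.I * ↑α)) = 1 := by
    rw [Complex.mul_conj, ← Complex.sq_norm, hc1]; norm_num
  have hdp : ∀ z ∈ Ω, DifferentiableAt ℝ p z := fun z hz =>
    (h.smooth_p.differentiableOn (by simp)).differentiableAt (hΩ.mem_nhds hz)
  have hdA : ∀ z ∈ Ω, DifferentiableAt ℝ A z := fun z hz =>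
    (h.smooth_A.differentiableOn (by simp)).differentiableAt (hΩ.mem_nhds hz)
  have hsmul : ContDiff ℝ (⊤ : ℕ∞) (fun w : ℂ => Complex.exp (Complex.I * ↑α) * w) :=
    contDiff_const.mul contDiff_id
  refine ⟨h.smooth_lam, h.smooth_u, contDiffOn_const, ?_, ?_, h.lam_pos, ?_, ?_, ?_, ?_⟩
  · exact (hsmul.comp_contDiffOn h.smooth_p)
  · exact (hsmul.comp_contDiffOn h.smooth_A)
  · intro z hz
    rw [wdzbar_const_mul _ _ _ (hdp z hz), h.c1 z hz, wdz_const, wdz_const]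
    ring
  · intro z hz
    rw [wdzbar_const_mul _ _ _ (hdA z hz), h.c2 z hz]
    have : Complex.exp (Complex.I * ↑α) * ((H : ℂ) + Complex.I * τ) = -(H:ℂ) + Complex.I * τ := hα
    push_cast
    calc Complex.exp (Complex.I * ↑α) * (↑(u z) * ↑(lam z) / 2 * (↑H + Complex.I * ↑τ))
        = ↑(u z) * ↑(lam z) / 2 * (Complex.exp (Complex.I * ↑α) * (↑H + Complex.I * ↑τ)) := by ring
      _ = ↑(u z) * ↑(lam z) / 2 * (-↑H + Complex.I * ↑τ) := by rw [hα]
  · intro z hz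
    rw [h.c3 z hz, map_mul]
    push_cast
    linear_combination (-(A z)) * hα
      + (2 * p z / (lam z : ℂ) * (starRingEnd ℂ) (A z)) * hcc
  · intro z hz
    have := h.c4 z hz
    simpa [map_mul, hc1] using this
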